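/- arXiv:2502.18605 — 10 statements merged into one kernel-verified Lean document; each statement's English description precedes it below -/
import Mathlib

section
/- Let X ⊆ ℝ^d be a convex, compact set with nonempty interior, let F : X → ℝ^d be Borel measurable and bounded, and let δ > 0. For x ∈ X let B_δ(x) denote the closed Euclidean ball of radius δ centered at x and let |·| denote d-dimensional Lebesgue measure. Then |B_δ(x) ∩ X| > 0 for every x ∈ X, and the map F̂_δ : X → ℝ^d defined by F̂_δ(x) = (1 / |B_δ(x) ∩ X|) ∫_{B_δ(x) ∩ X} F(y) dy is continuous on X. -/
/-! The sets `B_δ(x) ∩ X` have positive measure because `X`, being convex with nonempty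
interior, is contained in the closure of its interior, so `B_δ(x)` meets the open set
`interior X`. Both the measure of `B_δ(x) ∩ X` and the integral of `F` over it are integrals
over `B_δ(x)` of a fixed integrable function (`1_X` and `1_X F`); as `x` moves, the indicator
of `B_δ(x)` converges pointwise off the null sphere `∂B_δ(x)`, so dominated convergence makes
both continuous, and so is their quotient. -/

open MeasureTheory Metric Set Filter Topology

lemma Convex.measure_closedBall_inter_pos {E : Type*} [NormedAddCommGroup E] [NormedSpace ℝ E]
    [MeasurableSpace E] (μ : Measure E) [μ.IsOpenPosMeasure] {X : Set E} (hXconv : Convex ℝ X)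
    (hXint : (interior X).Nonempty) {x : E} (hx : x ∈ closure X) {δ : ℝ} (hδ : 0 < δ) :
    0 < μ (closedBall x δ ∩ X) := by
  rw [← hXconv.closure_interior_eq_closure_of_nonempty_interior hXint] at hx
  obtain ⟨z, hzX, hzx⟩ := Metric.mem_closure_iff.1 hx δ hδ
  have hz : z ∈ ball x δ ∩ interior X := ⟨mem_ball'.2 hzx, hzX⟩
  exact (isOpen_ball.inter isOpen_interior).measure_pos μ ⟨z, hz⟩ |>.trans_le <|
    measure_mono (inter_subset_inter ball_subset_closedBall interior_subset)

lemma continuousAt_indicator_closedBall_apply {E G : Type*} [PseudoMetricSpace E]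
    [TopologicalSpace G] [Zero G] (g : E → G) {r : ℝ} {x₀ y : E} (hy : y ∉ sphere x₀ r) :
    ContinuousAt (fun x => (closedBall x r).indicator g y) x₀ := by
  have hswap : (fun x => (closedBall x r).indicator g y) =
      (closedBall y r).indicator fun _ => g y := by
    ext x
    simp only [indicator, mem_closedBall, dist_comm]
  rw [hswap]
  exact continuousOn_const.continuousAt_indicator fun h =>
    hy (mem_sphere_comm.1 (frontier_closedBall_subset_sphere h))

section AddHaar

variable {E G : Type*} [NormedAddCommGroup E] [NormedSpace ℝ E] [FiniteDimensional ℝ E]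
  [MeasurableSpace E] [BorelSpace E] [NormedAddCommGroup G] [NormedSpace ℝ G]
  (μ : Measure E) [μ.IsAddHaarMeasure]

lemma continuous_setIntegral_closedBall {g : E → G} (hg : Integrable g μ) {r : ℝ} (hr : r ≠ 0) :
    Continuous fun x => ∫ y in closedBall x r, g y ∂μ := by
  refine continuous_iff_continuousAt.2 fun x₀ => ?_
  simp_rw [← integral_indicator measurableSet_closedBall]
  refine continuousAt_of_dominated (bound := fun y => ‖g y‖)
    (Eventually.of_forall fun _ => hg.aestronglyMeasurable.indicator measurableSet_closedBall)
    (Eventually.of_forall fun _ => Eventually.of_forall fun _ => norm_indicator_le_norm_self _ _)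
    hg.norm ?_
  filter_upwards [measure_eq_zero_iff_ae_notMem.1 (Measure.addHaar_sphere_of_ne_zero μ x₀ hr)]
    with y hy using continuousAt_indicator_closedBall_apply g hy

lemma continuous_setIntegral_closedBall_inter {X : Set E} (hX : MeasurableSet X) {g : E → G}
    (hg : IntegrableOn g X μ) {r : ℝ} (hr : r ≠ 0) :
    Continuous fun x => ∫ y in closedBall x r ∩ X, g y ∂μ := by
  simpa only [setIntegral_indicator hX] using
    continuous_setIntegral_closedBall μ ((integrable_indicator_iff hX).2 hg) hr

end AddHaar

/-- **Continuity of the local average of `F`** (Lemma `cont`):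
If `X ⊆ ℝ^d` is convex and compact with nonempty interior and `F` is Borel measurable and
bounded on `X`, then for every `δ > 0` each set `B_δ(x) ∩ X` (for `x ∈ X`) has positive
Lebesgue measure, and the local-average map
`F̂_δ : x ↦ (1 / |B_δ(x) ∩ X|) ∫_{B_δ(x) ∩ X} F(y) dy` is continuous on `X`. -/
theorem local_average_continuous {d : ℕ} (X : Set (EuclideanSpace ℝ (Fin d)))
    (hXconv : Convex ℝ X) (hXcomp : IsCompact X) (hXint : (interior X).Nonempty)
    (F : EuclideanSpace ℝ (Fin d) → EuclideanSpace ℝ (Fin d))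
    (hFmeas : Measurable F)
    (B : ℝ) (hFbd : ∀ x ∈ X, ‖F x‖ ≤ B)
    (δ : ℝ) (hδ : 0 < δ) :
    (∀ x ∈ X, 0 < volume (Metric.closedBall x δ ∩ X)) ∧
    ContinuousOn
      (fun x => (volume (Metric.closedBall x δ ∩ X)).toReal⁻¹ •
        ∫ y in Metric.closedBall x δ ∩ X, F y) X := by
  have hXmeas : MeasurableSet X := hXcomp.isClosed.measurableSet
  have hpos : ∀ x ∈ X, 0 < volume (closedBall x δ ∩ X) := fun x hx =>
    hXconv.measure_closedBall_inter_pos volume hXint (subset_closure hx) hδ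
  have hFint : IntegrableOn F X := Measure.integrableOn_of_bounded hXcomp.measure_lt_top.ne
    hFmeas.aestronglyMeasurable (ae_restrict_of_forall_mem hXmeas hFbd)
  have hvol : Continuous fun x => (volume (closedBall x δ ∩ X)).toReal := by
    simpa only [setIntegral_const, smul_eq_mul, mul_one, measureReal_def] using continuous_setIntegral_closedBall_inter volume hXmeas
      (integrableOn_const (C := (1 : ℝ)) hXcomp.measure_lt_top.ne) hδ.ne'
  refine ⟨hpos, (hvol.continuousOn.inv₀ fun x hx => ?_).smul
    (continuous_setIntegral_closedBall_inter volume hXmeas hFint hδ.ne').continuousOn⟩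
  have hfin : volume (closedBall x δ ∩ X) ≠ ⊤ :=
    ((measure_mono inter_subset_right).trans_lt hXcomp.measure_lt_top).ne
  exact (ENNReal.toReal_pos (hpos x hx).ne' hfin).ne'
end

section
/- Let X = [−1, 1] ⊆ ℝ and let F : X → ℝ be the sign function F(x) = −1 if x < 0 and F(x) = 1 if x ≥ 0. Then: (a) for every ε with 0 ≤ ε < 1, there is no x ∈ X such that F(x) · (x' − x) ≥ −ε for all x' ∈ X (i.e., no ε-approximate VI solution exists); (b) for every ε with 0 < ε ≤ 1, the probability measure μ = (1/2)δ_{−ε} + (1/2)δ_{ε} (equal point masses at −ε and ε) satisfies ∫ F(x) · (x' − x) dμ(x) = −ε ≥ −ε for every x' ∈ [−1, 1], i.e., μ is an ε-approximate EVI solution. -/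
open MeasureTheory
open scoped ENNReal

/-- **The sign-function VI has no approximate solution, yet approximate EVI solutions exist**
(Example `sign-evi`): on `X = [−1,1]` with `F = sgn`, (a) there is no `ε`-approximate VI
solution for `0 ≤ ε < 1`; (b) for `0 < ε ≤ 1` the measure `μ = ½δ_{−ε} + ½δ_{ε}` is a
probability measure satisfying `∫ F(x)(x' − x) dμ(x) = −ε ≥ −ε` for every `x' ∈ [−1,1]`. -/
theorem sign_vi_evi (F : ℝ → ℝ) (hF : ∀ x, F x = if x < 0 then -1 else 1) :
    (∀ ε : ℝ, 0 ≤ ε → ε < 1 →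
      ¬ ∃ x ∈ Set.Icc (-1 : ℝ) 1, ∀ x' ∈ Set.Icc (-1 : ℝ) 1, F x * (x' - x) ≥ -ε) ∧
    (∀ ε : ℝ, 0 < ε → ε ≤ 1 →
      IsProbabilityMeasure
        ((1/2 : ℝ≥0∞) • Measure.dirac (-ε) + (1/2 : ℝ≥0∞) • Measure.dirac ε) ∧
      ∀ x' ∈ Set.Icc (-1 : ℝ) 1,
        (∫ x, F x * (x' - x)
            ∂((1/2 : ℝ≥0∞) • Measure.dirac (-ε) + (1/2 : ℝ≥0∞) • Measure.dirac ε)) = -ε) := by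
  constructor
  · rintro ε hε0 hε1 ⟨x, hx, h⟩
    by_cases hxlt : x < 0
    · have h1 := h 1 (by constructor <;> norm_num)
      rw [hF x, if_pos hxlt] at h1
      linarith
    · have h1 := h (-1) (by constructor <;> norm_num)
      rw [hF x, if_neg hxlt] at h1
      push_neg at hxlt
      linarith
  · intro ε hε0 hε1
    have hInt1 : ∀ x' : ℝ, Integrable (fun x => F x * (x' - x)) (Measure.dirac (-ε)) :=
      fun x' => (integrable_const _).congr (ae_eq_dirac _).symm
    have hInt2 : ∀ x' : ℝ, Integrable (fun x => F x * (x' - x)) (Measure.dirac ε) :=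
      fun x' => (integrable_const _).congr (ae_eq_dirac _).symm
    constructor
    · constructor
      simp [Measure.add_apply, Measure.smul_apply]
      exact ENNReal.inv_two_add_inv_two
    · intro x' _
      rw [integral_add_measure ((hInt1 x').smul_measure (by norm_num))
          ((hInt2 x').smul_measure (by norm_num)),
        integral_smul_measure, integral_smul_measure, integral_dirac, integral_dirac,
        hF, hF, if_pos (by linarith), if_neg (by simp; linarith)]
      have : ((1:ℝ≥0∞)/2).toReal = 1/2 := by norm_num
      rw [this, smul_eq_mul, smul_eq_mul]
      ring
end

section
/- Let X = [−1, 1] ⊆ ℝ and let F : X → ℝ be the sign function F(x) = −1 if x < 0 and F(x) = 1 if x ≥ 0. Then for every Borel probability measure μ on [−1, 1] there exists x' ∈ [−1, 1] such that ∫ F(x) · (x' − x) dμ(x) < 0. In particular, the EVI problem for F admits no exact solution. -/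
open MeasureTheory

/-- **The sign-function EVI has no exact solution** (Proposition `notexact`):
on `X = [−1,1]` with `F = sgn`, for every Borel probability measure `μ` concentrated on
`[−1,1]` there exists `x' ∈ [−1,1]` with `∫ F(x)(x' − x) dμ(x) < 0`. -/
theorem sign_no_exact_evi (F : ℝ → ℝ) (hF : ∀ x, F x = if x < 0 then -1 else 1)
    (μ : Measure ℝ) [IsProbabilityMeasure μ] (hsupp : μ (Set.Icc (-1 : ℝ) 1)ᶜ = 0) :
    ∃ x' ∈ Set.Icc (-1 : ℝ) 1, (∫ x, F x * (x' - x) ∂μ) < 0 := by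
  have hFfun : F = fun x => if x < 0 then -1 else 1 := funext hF
  have hFmeas : Measurable F := by
    rw [hFfun]
    exact Measurable.ite (measurableSet_lt measurable_id measurable_const)
      measurable_const measurable_const
  have hae : ∀ᵐ x ∂μ, x ∈ Set.Icc (-1:ℝ) 1 := by
    rw [ae_iff]
    exact hsupp
  have hFbound : ∀ x, |F x| ≤ 1 := by
    intro x; rw [hF]; split <;> simp
  have hintF : Integrable F μ := by
    apply Integrable.mono' (integrable_const 1) hFmeas.aestronglyMeasurable
    filter_upwards with x using hFbound x
  have hintFx : Integrable (fun x => F x * x) μ := by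
    apply Integrable.mono' (integrable_const 1) (hFmeas.mul measurable_id).aestronglyMeasurable
    filter_upwards [hae] with x hx
    have hx1 : |x| ≤ 1 := abs_le.2 ⟨hx.1, hx.2⟩
    calc |F x * x| = |F x| * |x| := abs_mul _ _
      _ ≤ 1 * 1 := mul_le_mul (hFbound x) hx1 (abs_nonneg _) zero_le_one
      _ = 1 := one_mul 1
  set c := ∫ x, F x ∂μ with hc_def
  set m := ∫ x, F x * x ∂μ with hm_def
  have hFx_abs : ∀ x : ℝ, F x * x = |x| := by
    intro x; rw [hF]
    rcases lt_or_ge x 0 with h | h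
    · simp [h, abs_of_neg h]
    · simp [not_lt.2 h, abs_of_nonneg h]
  have hnn : ∀ x : ℝ, (0:ℝ) ≤ F x * x := by
    intro x; rw [hFx_abs]; exact abs_nonneg x
  have hm_nonneg : 0 ≤ m := integral_nonneg hnn
  have key : ∀ x' : ℝ, (∫ x, F x * (x' - x) ∂μ) = x' * c - m := by
    intro x'
    have h1 : (fun x => F x * (x' - x)) = fun x => x' * F x - F x * x := by
      funext x; ring
    rw [h1, integral_sub (hintF.const_mul x') hintFx, integral_const_mul]
  rcases lt_trichotomy c 0 with hc | hc | hc
  · exact ⟨1, by norm_num, by rw [key]; linarith⟩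
  · have hm : 0 < m := by
      rcases hm_nonneg.lt_or_eq with h | h
      · exact h
      · exfalso
        have hm0 : m = 0 := h.symm
        have h0 := (integral_eq_zero_iff_of_nonneg hnn hintFx).mp hm0
        have hx0 : ∀ᵐ x ∂μ, x = 0 := by
          filter_upwards [h0] with x hx
          have : |x| = 0 := by rw [← hFx_abs x]; exact hx
          exact abs_eq_zero.mp this
        have hF1 : ∀ᵐ x ∂μ, F x = 1 := by
          filter_upwards [hx0] with x hx
          rw [hF, hx]; norm_num
        have hcc : c = 1 := by
          rw [hc_def, integral_congr_ae hF1]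
          simp
        linarith
    exact ⟨0, by norm_num, by rw [key]; linarith⟩
  · exact ⟨-1, by norm_num, by rw [key]; linarith⟩
end

section
/- Let X = [−1, 1] ⊆ ℝ and define F : X → ℝ by F(x) = −1 if x < 0 or x = 1/2, and F(x) = 1 otherwise. Then: (a) for every ε with 0 ≤ ε < 1/2, there is no x ∈ X such that F(x) · (x' − x) ≥ −ε for all x' ∈ X (no ε-approximate VI solution exists); (b) for every x* ∈ [0, 1/2), the probability measure μ = (1/2)δ_{x*} + (1/2)δ_{1/2} satisfies ∫ F(x) · (x' − x) dμ(x) = (1/2)(1/2 − x*) > 0 for every x' ∈ [−1, 1], hence μ is an exact EVI solution. -/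
open MeasureTheory
open scoped ENNReal

/-- **A VI with no approximate solution but exact EVI solutions**
(modified sign example): on `X = [−1,1]` with `F(x) = −1` if `x < 0` or `x = 1/2`, and `1`
otherwise, (a) there is no `ε`-approximate VI solution for `0 ≤ ε < 1/2`; (b) for every
`x* ∈ [0, 1/2)`, the measure `μ = ½δ_{x*} + ½δ_{1/2}` satisfies
`∫ F(x)(x' − x) dμ(x) = ½(1/2 − x*) > 0` for every `x' ∈ [−1,1]`, hence is an exact EVI
solution. -/
theorem modified_sign_exact_evi (F : ℝ → ℝ)
    (hF : ∀ x, F x = if x < 0 ∨ x = 1/2 then -1 else 1) :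
    (∀ ε : ℝ, 0 ≤ ε → ε < 1/2 →
      ¬ ∃ x ∈ Set.Icc (-1 : ℝ) 1, ∀ x' ∈ Set.Icc (-1 : ℝ) 1, F x * (x' - x) ≥ -ε) ∧
    (∀ xs ∈ Set.Ico (0 : ℝ) (1/2),
      (∀ x' ∈ Set.Icc (-1 : ℝ) 1,
        (∫ x, F x * (x' - x)
            ∂((1/2 : ℝ≥0∞) • Measure.dirac xs + (1/2 : ℝ≥0∞) • Measure.dirac (1/2 : ℝ))) =
          (1/2) * (1/2 - xs)) ∧
      0 < (1/2 : ℝ) * (1/2 - xs)) := by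
  constructor
  · rintro ε hε hε' ⟨x, hx, h⟩
    by_cases hc : x < 0 ∨ x = 1/2
    · have h1 := h 1 (by norm_num)
      rw [hF x, if_pos hc] at h1
      rcases hc with hc | hc
      · nlinarith
      · nlinarith
    · have h1 := h (-1) (by norm_num)
      rw [hF x, if_neg hc] at h1
      push_neg at hc
      nlinarith [hc.1]
  · rintro xs ⟨hxs0, hxs1⟩
    refine ⟨fun x' _ => ?_, by nlinarith⟩
    have hint : ∀ a : ℝ, Integrable (fun x => F x * (x' - x))
        ((1/2 : ℝ≥0∞) • Measure.dirac a) := fun a =>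
      (((integrable_const _).congr (ae_eq_dirac fun x => F x * (x' - x)).symm)).smul_measure
        (by norm_num)
    rw [integral_add_measure (hint xs) (hint (1/2)), integral_smul_measure,
      integral_smul_measure, integral_dirac, integral_dirac, hF xs, hF (1/2)]
    rw [if_neg (by push_neg; exact ⟨hxs0, ne_of_lt hxs1⟩), if_pos (Or.inr rfl)]
    have : ((1/2 : ℝ≥0∞)).toReal = 1/2 := by simp
    rw [this]
    simp only [smul_eq_mul]
    ring
end

section
/- Let X = [−1, 1] ⊆ ℝ and let F(x) = −1 if x < 0 and F(x) = 1 if x ≥ 0 (the sign function). For δ > 0 define φ_δ : [−1, 1] → [−1, 1] by φ_δ(x) = 1 if x < −2δ, φ_δ(x) = −(x + δ)/δ if −2δ ≤ x ≤ 0, and φ_δ(x) = −1 if x > 0; each φ_δ is continuous and maps [−1, 1] into [−1, 1]. Then for every Borel probability measure μ on [−1, 1] and every ε with 0 ≤ ε < 1, there exists δ > 0 such that ∫ F(x) · (φ_δ(x) − x) dμ(x) < −ε. Consequently, with Φ = {φ_δ : δ > 0}, the Φ-EVI problem for F admits no ε-approximate solution for any ε < 1, even though every member of Φ is continuous and F is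 piecewise constant. -/
open MeasureTheory Filter Topology

/-!
As `δ → 0⁺`, `φ_δ` converges pointwise to `-F` (at `0` it equals `-1` for every `δ`), so the
integrand `F x (φ_δ x - x)` converges to `-1 - |x| ≤ -1`. By dominated convergence the integral
tends to something at most `-1 < -ε`.
-/

/-- Unlike `Real.sign`, `sgn 0 = 1`. -/
noncomputable def sgn (x : ℝ) : ℝ := if x < 0 then -1 else 1

noncomputable def ramp (δ x : ℝ) : ℝ :=
  if x < -(2 * δ) then 1 else if x ≤ 0 then -(x + δ) / δ else -1

lemma measurable_sgn : Measurable sgn :=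
  Measurable.ite measurableSet_Iio measurable_const measurable_const

lemma abs_sgn (x : ℝ) : |sgn x| = 1 := by
  unfold sgn; split_ifs <;> norm_num

lemma sgn_mul_neg_sgn_sub (x : ℝ) : sgn x * (-sgn x - x) = -1 - |x| := by
  unfold sgn
  split_ifs with hx
  · rw [abs_of_neg hx]; ring
  · rw [abs_of_nonneg (not_lt.1 hx)]; ring

section ramp

variable {δ : ℝ}

lemma ramp_eq_max_min (hδ : 0 < δ) (x : ℝ) :
    ramp δ x = max (-1) (min 1 (-(x + δ) / δ)) := by
  unfold ramp
  split_ifs with h₁ h₂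
  · have h : 1 ≤ -(x + δ) / δ := by rw [le_div_iff₀ hδ]; linarith
    rw [min_eq_left h]; norm_num
  · have hle : -(x + δ) / δ ≤ 1 := by rw [div_le_one hδ]; linarith
    have hge : -1 ≤ -(x + δ) / δ := by rw [le_div_iff₀ hδ]; linarith
    rw [min_eq_right hle, max_eq_right hge]
  · have h : -(x + δ) / δ ≤ -1 := by rw [div_le_iff₀ hδ]; linarith
    rw [min_eq_right (h.trans (by norm_num)), max_eq_left h]

lemma continuous_ramp (hδ : 0 < δ) : Continuous (ramp δ) := by
  rw [funext (ramp_eq_max_min hδ)]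
  fun_prop

lemma ramp_mem_Icc (hδ : 0 < δ) (x : ℝ) : ramp δ x ∈ Set.Icc (-1) 1 := by
  rw [ramp_eq_max_min hδ]
  exact ⟨le_max_left _ _, max_le (by norm_num) (min_le_left _ _)⟩

lemma abs_sgn_mul_ramp_sub_le (hδ : 0 < δ) (x : ℝ) :
    |sgn x * (ramp δ x - x)| ≤ 1 + |x| := by
  have hramp : |ramp δ x| ≤ 1 := abs_le.2 (ramp_mem_Icc hδ x)
  rw [abs_mul, abs_sgn, one_mul]
  exact (abs_sub _ _).trans (by linarith)

end ramp

lemma eventually_ramp_eq_neg_sgn (x : ℝ) : ∀ᶠ δ in 𝓝[>] 0, ramp δ x = -sgn x := by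
  rcases lt_or_ge x 0 with hx | hx
  · have hsmall : ∀ᶠ δ in 𝓝[>] (0 : ℝ), δ < -x / 2 :=
      nhdsWithin_le_nhds (eventually_lt_nhds (by linarith))
    filter_upwards [hsmall] with δ hδ
    rw [ramp, if_pos (by linarith), sgn, if_pos hx]
    norm_num
  · filter_upwards [self_mem_nhdsWithin] with δ (hδ : 0 < δ)
    rw [ramp, if_neg (by linarith), sgn, if_neg (not_lt.2 hx)]
    split_ifs with hx₀
    · rw [le_antisymm hx₀ hx, zero_add, neg_div, div_self hδ.ne']
    · rfl

theorem tendsto_integral_sgn_mul_ramp_sub {μ : Measure ℝ} [IsFiniteMeasure μ]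
    (hμ : Integrable id μ) :
    Tendsto (fun δ => ∫ x, sgn x * (ramp δ x - x) ∂μ) (𝓝[>] 0) (𝓝 (∫ x, -1 - |x| ∂μ)) := by
  refine tendsto_integral_filter_of_dominated_convergence (fun x => 1 + |x|) ?_ ?_
    ((integrable_const 1).add hμ.abs) (ae_of_all _ fun x => ?_)
  · filter_upwards [self_mem_nhdsWithin] with δ (hδ : 0 < δ)
    exact (measurable_sgn.mul
      ((continuous_ramp hδ).measurable.sub measurable_id)).aestronglyMeasurable
  · filter_upwards [self_mem_nhdsWithin] with δ (hδ : 0 < δ)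
    exact ae_of_all _ (abs_sgn_mul_ramp_sub_le hδ)
  · rw [← sgn_mul_neg_sgn_sub]
    refine tendsto_const_nhds.congr' ?_
    filter_upwards [eventually_ramp_eq_neg_sgn x] with δ hδ
    rw [hδ]

lemma integral_neg_one_sub_abs_le {μ : Measure ℝ} [IsProbabilityMeasure μ]
    (hμ : Integrable id μ) : ∫ x, -1 - |x| ∂μ ≤ -1 := by
  have h := integral_mono ((integrable_const (-1)).sub hμ.abs) (integrable_const (-1))
    fun x => show -1 - |x| ≤ -1 by linarith [abs_nonneg x]
  simpa using h

lemma integrable_id_of_ae_mem_Icc {μ : Measure ℝ} [IsFiniteMeasure μ] {a b : ℝ}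
    (hμ : ∀ᵐ x ∂μ, x ∈ Set.Icc a b) : Integrable id μ := by
  refine (integrable_const (max |a| |b|)).mono' measurable_id.aestronglyMeasurable ?_
  filter_upwards [hμ] with x hx
  exact abs_le_max_abs_abs hx.1 hx.2

/-- **Continuous deviations do not guarantee approximate Φ-EVI solutions**
(Theorem `continuous-counterexample`): on `X = [−1,1]` with `F = sgn` and the family of
continuous maps `φ_δ` (for `δ > 0`) defined below, every `φ_δ` is continuous on `[−1,1]`
and maps `[−1,1]` into itself, yet for every Borel probability measure `μ` concentrated on
`[−1,1]` and every `0 ≤ ε < 1` there exists `δ > 0` with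
`∫ F(x)(φ_δ(x) − x) dμ(x) < −ε`; hence the `Φ`-EVI problem with `Φ = {φ_δ : δ > 0}`
admits no `ε`-approximate solution for any `ε < 1`. -/
theorem continuous_deviations_counterexample (F : ℝ → ℝ)
    (hF : ∀ x, F x = if x < 0 then -1 else 1)
    (φ : ℝ → ℝ → ℝ)
    (hφ : ∀ δ : ℝ, 0 < δ → ∀ x : ℝ,
      φ δ x = if x < -(2*δ) then 1 else if x ≤ 0 then -(x + δ)/δ else -1) :
    (∀ δ : ℝ, 0 < δ →
      ContinuousOn (φ δ) (Set.Icc (-1 : ℝ) 1) ∧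
      Set.MapsTo (φ δ) (Set.Icc (-1 : ℝ) 1) (Set.Icc (-1 : ℝ) 1)) ∧
    ∀ (μ : Measure ℝ), IsProbabilityMeasure μ → μ (Set.Icc (-1 : ℝ) 1)ᶜ = 0 →
      ∀ ε : ℝ, 0 ≤ ε → ε < 1 →
        ∃ δ : ℝ, 0 < δ ∧ (∫ x, F x * (φ δ x - x) ∂μ) < -ε := by
  have hF : F = sgn := funext hF
  have hφ : ∀ δ, 0 < δ → φ δ = ramp δ := fun δ hδ => funext (hφ δ hδ)
  subst hF
  refine ⟨fun δ hδ => ?_, fun μ _ hμ ε _ hε => ?_⟩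
  · rw [hφ δ hδ]
    exact ⟨(continuous_ramp hδ).continuousOn, fun x _ => ramp_mem_Icc hδ x⟩
  · have hid : Integrable id μ := integrable_id_of_ae_mem_Icc (ae_iff.2 hμ)
    have hlim := tendsto_integral_sgn_mul_ramp_sub hid
    have hbelow : ∀ᶠ δ in 𝓝[>] 0, ∫ x, sgn x * (ramp δ x - x) ∂μ < -ε :=
      hlim.eventually_lt_const ((integral_neg_one_sub_abs_le hid).trans_lt (by linarith))
    obtain ⟨δ, hδ, hlt⟩ := (hbelow.and self_mem_nhdsWithin).exists
    exact ⟨δ, hlt, by rwa [hφ δ hlt]⟩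
end

section
/- Let X ⊆ ℝ^d be nonempty, convex, and compact, and let F : X → ℝ^d be Borel measurable and bounded. Define the VI gap function VIGap(x) := −min_{x' ∈ X} ⟨F(x), x' − x⟩ = max_{x' ∈ X} ⟨F(x), x − x'⟩ (the extremum is attained since X is compact); VIGap is nonnegative and Borel measurable. Let ε ≥ 0 and let μ be a Borel probability measure on X such that ∫ ⟨F(x), φ(x) − x⟩ dμ(x) ≥ −ε for every Borel measurable map φ : X → X. Then ∫ VIGap(x) dμ(x) ≤ ε. -/
/-!
Against a fixed countable dense family `e k` in `X`, the greedy choice "best of `e 0, …, e n`"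
is a measurable deviation `φₙ : X → X`, so the EVI condition bounds `∫ maxₖ≤ₙ ⟪F x, x - e k⟫ dμ`
by `ε`. These maxima increase to `VIGap x` (density and continuity in `x'`), and they are
uniformly bounded on `X` since `X` is bounded and `F` is bounded on `X`; dominated convergence
passes the bound to the limit.
-/

open MeasureTheory Filter Set
open scoped RealInnerProductSpace Topology

theorem abs_inner_sub_le_mul_diam {E : Type*} [NormedAddCommGroup E] [InnerProductSpace ℝ E]
    {s : Set E} (hs : Bornology.IsBounded s) {v x y : E} {B : ℝ} (hv : ‖v‖ ≤ B)
    (hx : x ∈ s) (hy : y ∈ s) : |⟪v, x - y⟫| ≤ B * Metric.diam s := by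
  calc |⟪v, x - y⟫| ≤ ‖v‖ * ‖x - y‖ := abs_real_inner_le_norm v (x - y)
    _ ≤ B * Metric.diam s := by
      rw [← dist_eq_norm]
      exact mul_le_mul hv (Metric.dist_le_diam_of_mem hs hx hy) dist_nonneg
        ((norm_nonneg v).trans hv)

/-- The nonnegativity hypothesis accounts for the junk value `sSup ∅ = 0` that the points
outside `s` contribute to the bounded supremum. -/
theorem Real.biSup_eq_iSup_of_denseRange {γ ι : Type*} [TopologicalSpace γ] {s : Set γ}
    {f : γ → ℝ} (hf : ContinuousOn f s) (hbdd : BddAbove (f '' s)) (hnonneg : ∃ a ∈ s, 0 ≤ f a)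
    {e : ι → s} (he : DenseRange e) :
    ⨆ y ∈ s, f y = ⨆ i, f (e i) := by
  obtain ⟨a, ha, hfa⟩ := hnonneg
  have hbdd' : BddAbove (range fun y : s => f y) := by rwa [← image_eq_range]
  rw [← ciSup_subtype_fun hbdd' (Real.sSup_empty.le.trans (hfa.trans (le_ciSup hbdd' ⟨a, ha⟩))),
    ← iSup_range' (fun y : s => f y) e]
  exact (he.ciSup' hf.domRestrict).symm

theorem measurable_partialSups_apply {α : Type*} [MeasurableSpace α] {g : ℕ → α → ℝ}
    (hg : ∀ k, Measurable (g k)) (n : ℕ) :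
    Measurable fun x => partialSups (fun k => g k x) n := by
  simp only [partialSups_eq_sup'_range]
  exact Finset.measurable_range_sup'' fun k _ => hg k

theorem tendsto_integral_partialSups {α : Type*} [MeasurableSpace α] {μ : Measure α}
    [IsFiniteMeasure μ] {g : ℕ → α → ℝ} {C : ℝ} (hg : ∀ k, Measurable (g k))
    (hC : ∀ᵐ x ∂μ, ∀ k, |g k x| ≤ C) :
    Tendsto (fun n => ∫ x, partialSups (fun k => g k x) n ∂μ) atTop
      (𝓝 (∫ x, ⨆ k, g k x ∂μ)) := by
  refine tendsto_integral_of_dominated_convergence (fun _ => C)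
    (fun n => (measurable_partialSups_apply hg n).aestronglyMeasurable) (integrable_const C)
    (fun n => hC.mono fun x hx => ?_) (hC.mono fun x hx => ?_)
  · rw [Real.norm_eq_abs, abs_le]
    exact ⟨(abs_le.1 (hx 0)).1.trans (le_partialSups_of_le (fun k => g k x) n.zero_le),
      partialSups_le _ n C fun k _ => (abs_le.1 (hx k)).2⟩
  · have hbdd : BddAbove (range fun k => g k x) :=
      ⟨C, forall_mem_range.2 fun k => (le_abs_self _).trans (hx k)⟩
    rw [← ciSup_partialSups_eq hbdd]
    exact tendsto_atTop_ciSup (partialSups_monotone _) (bddAbove_range_partialSups.2 hbdd)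

section GreedyArgmax

variable {α β : Type*} (g : α → β → ℝ) (e : ℕ → β)

noncomputable def greedyArgmax : ℕ → α → β
  | 0, _ => e 0
  | n + 1, x =>
    if partialSups (fun k => g x (e k)) n < g x (e (n + 1)) then e (n + 1)
    else greedyArgmax n x

theorem greedyArgmax_mem {s : Set β} (he : ∀ k, e k ∈ s) (n : ℕ) (x : α) :
    greedyArgmax g e n x ∈ s := by
  induction n with
  | zero => exact he 0
  | succ n ih =>
    rw [greedyArgmax]
    split_ifs
    exacts [he _, ih]

theorem apply_greedyArgmax (n : ℕ) (x : α) :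
    g x (greedyArgmax g e n x) = partialSups (fun k => g x (e k)) n := by
  induction n with
  | zero => rfl
  | succ n ih =>
    rw [greedyArgmax, partialSups_add_one]
    split_ifs with h
    · exact (max_eq_right h.le).symm
    · rw [ih, max_eq_left (not_lt.1 h)]

theorem measurable_greedyArgmax [MeasurableSpace α] [MeasurableSpace β]
    (hg : ∀ k, Measurable fun x => g x (e k)) (n : ℕ) : Measurable (greedyArgmax g e n) := by
  induction n with
  | zero => exact measurable_const
  | succ n ih =>
    exact Measurable.ite (measurableSet_lt (measurable_partialSups_apply hg n) (hg (n + 1)))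
      measurable_const ih

end GreedyArgmax

theorem evi_all_measurable_deviations_vigap_general {d : ℕ}
    (X : Set (EuclideanSpace ℝ (Fin d)))
    (hXne : X.Nonempty) (hXcomp : IsCompact X)
    (F : EuclideanSpace ℝ (Fin d) → EuclideanSpace ℝ (Fin d))
    (hFmeas : Measurable F) (B : ℝ) (hFbd : ∀ x ∈ X, ‖F x‖ ≤ B)
    (ε : ℝ)
    (μ : Measure (EuclideanSpace ℝ (Fin d))) [IsProbabilityMeasure μ] (hsupp : μ Xᶜ = 0)
    (hEVI : ∀ φ : EuclideanSpace ℝ (Fin d) → EuclideanSpace ℝ (Fin d),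
      Measurable φ → Set.MapsTo φ X X → (∫ x, ⟪F x, φ x - x⟫ ∂μ) ≥ -ε) :
    (∫ x, (⨆ x' ∈ X, ⟪F x, x - x'⟫) ∂μ) ≤ ε := by
  have hX : ∀ᵐ x ∂μ, x ∈ X := ae_iff.2 hsupp
  have : Nonempty X := hXne.to_subtype
  obtain ⟨e, he⟩ := TopologicalSpace.exists_dense_seq X
  set gap := fun x x' => ⟪F x, x - x'⟫
  have hgap_meas : ∀ k, Measurable fun x => gap x (e k) := fun k =>
    hFmeas.inner (measurable_id.sub measurable_const)
  have hgap_eq : ∀ x ∈ X, ⨆ x' ∈ X, gap x x' = ⨆ k, gap x (e k) := fun x hx =>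
    Real.biSup_eq_iSup_of_denseRange (by fun_prop) (hXcomp.bddAbove_image (by fun_prop))
      ⟨x, hx, by simp [gap]⟩ he
  have hgap_bound : ∀ᵐ x ∂μ, ∀ k, |gap x (e k)| ≤ B * Metric.diam X := hX.mono fun x hx k =>
    abs_inner_sub_le_mul_diam hXcomp.isBounded (hFbd x hx) hx (e k).2
  have hpartial : ∀ n, ∫ x, partialSups (fun k => gap x (e k)) n ∂μ ≤ ε := fun n => by
    set φ := greedyArgmax gap (fun k => (e k : _)) n
    have hmaps : MapsTo φ X X := fun x _ => greedyArgmax_mem gap _ (fun k => (e k).2) n x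
    have hφ := hEVI φ (measurable_greedyArgmax gap _ hgap_meas n) hmaps
    have hneg : ∀ x, partialSups (fun k => gap x (e k)) n = -⟪F x, φ x - x⟫ := fun x => by
      rw [← apply_greedyArgmax, ← inner_neg_right, neg_sub]
    simp only [hneg, integral_neg]
    linarith
  rw [integral_congr_ae (hX.mono hgap_eq)]
  exact le_of_tendsto (tendsto_integral_partialSups hgap_meas hgap_bound)
    (Eventually.of_forall hpartial)

/-- **Φ-EVIs with all measurable deviations are tantamount to VIs** (Proposition `EVI-VI`):
if `X ⊆ ℝ^d` is nonempty, convex, compact, `F` is Borel measurable and bounded, and the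
Borel probability measure `μ` concentrated on `X` satisfies the `ε`-approximate `Φ`-EVI
condition for *all* Borel measurable maps `φ : X → X`, then
`∫ VIGap(x) dμ(x) ≤ ε`, where `VIGap(x) = max_{x' ∈ X} ⟨F(x), x − x'⟩`. -/
theorem evi_all_measurable_deviations_vigap {d : ℕ}
    (X : Set (EuclideanSpace ℝ (Fin d)))
    (hXne : X.Nonempty) (hXconv : Convex ℝ X) (hXcomp : IsCompact X)
    (F : EuclideanSpace ℝ (Fin d) → EuclideanSpace ℝ (Fin d))
    (hFmeas : Measurable F) (B : ℝ) (hFbd : ∀ x ∈ X, ‖F x‖ ≤ B)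
    (ε : ℝ) (hε : 0 ≤ ε)
    (μ : Measure (EuclideanSpace ℝ (Fin d))) [IsProbabilityMeasure μ] (hsupp : μ Xᶜ = 0)
    (hEVI : ∀ φ : EuclideanSpace ℝ (Fin d) → EuclideanSpace ℝ (Fin d),
      Measurable φ → Set.MapsTo φ X X → (∫ x, ⟪F x, φ x - x⟫ ∂μ) ≥ -ε) :
    (∫ x, (⨆ x' ∈ X, ⟪F x, x - x'⟫) ∂μ) ≤ ε :=
  evi_all_measurable_deviations_vigap_general X hXne hXcomp F hFmeas B hFbd ε μ hsupp hEVI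
end

section
/- Let X ⊆ ℝ^d be nonempty, convex, and compact, let F : X → ℝ^d be Borel measurable and bounded, and suppose that for every x' ∈ X the function x ↦ ⟨F(x), x' − x⟩ is concave on X. Let ε ≥ 0 and let μ be a Borel probability measure on X such that ∫ ⟨F(x), x' − x⟩ dμ(x) ≥ −ε for all x' ∈ X (an ε-approximate EVI solution). Then the barycenter x̄ := ∫ x dμ(x) lies in X and satisfies ⟨F(x̄), x' − x̄⟩ ≥ −ε for all x' ∈ X, i.e., x̄ is an ε-approximate VI solution. -/
open MeasureTheory
open scoped RealInnerProductSpace Pointwise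

/-! The gap `x ↦ ⟪F x, x' - x⟫` is concave, so Jensen's inequality bounds its mean by its
value at the barycenter. Since `F` is merely measurable, the gap may jump at the boundary of
`X`, so Jensen is derived instead from the fact that in finite dimension the mean of a
probability measure carried by a convex set (closed or not) lies in that set, applied to the
hypograph. That fact is proved by induction on dimension: if the mean `b` were outside `C`, a
supporting hyperplane at `b` would carry the measure on a face of `C` of smaller dimension. -/

section FiniteDimensional

variable {E : Type*} [NormedAddCommGroup E] [NormedSpace ℝ E] [FiniteDimensional ℝ E]

theorem Convex.exists_dual_le_of_mem_affineSpan_of_notMem {C : Set E} (hC : Convex ℝ C) {b : E}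
    (hbC : b ∈ affineSpan ℝ C) (hb : b ∉ C) :
    ∃ f : StrongDual ℝ E,
      ¬ vectorSpan ℝ C ≤ LinearMap.ker (f : E →ₗ[ℝ] ℝ) ∧ ∀ x ∈ C, f x ≤ f b := by
  obtain ⟨W, hVW⟩ := (vectorSpan ℝ C).exists_isCompl
  obtain ⟨c, hc⟩ : C.Nonempty := (affineSpan_nonempty (k := ℝ)).1 ⟨b, hbC⟩
  have hdir : ∀ x ∈ C, b - x ∈ vectorSpan ℝ C := fun x hx => by
    rw [← direction_affineSpan]
    exact AffineSubspace.vsub_mem_direction hbC (subset_affineSpan ℝ C hx)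
  -- Thickening `C` by a complement of its direction gives a convex body with nonempty interior
  -- not containing `b`; a functional bounded above on `c + W` vanishes on `W`, so it cannot also
  -- vanish on the direction of `C`.
  set T : Set E := C + (W : Set E)
  have hCT : C ⊆ T := fun x hx => ⟨x, hx, 0, W.zero_mem, add_zero x⟩
  have hcW : ∀ w ∈ W, c + w ∈ T := fun w hw => ⟨c, hc, w, hw, rfl⟩
  have hbT : b ∉ T := by
    rintro ⟨x, hx, w, hw, rfl⟩
    have hwV : w ∈ vectorSpan ℝ C := by simpa using hdir x hx
    have hw0 : w = 0 := Submodule.disjoint_def.1 hVW.disjoint w hwV hw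
    exact hb (by simpa [hw0] using hx)
  have hTspan : vectorSpan ℝ T = ⊤ := by
    refine eq_top_iff.2 (hVW.sup_eq_top ▸ sup_le (vectorSpan_mono ℝ hCT) fun w hw => ?_)
    simpa using vsub_mem_vectorSpan ℝ (hcW w hw) (hCT hc)
  have hTconv : Convex ℝ T := hC.add W.convex
  have hTint : (interior T).Nonempty := by
    rw [hTconv.interior_nonempty_iff_affineSpan_eq_top,
      AffineSubspace.affineSpan_eq_top_iff_vectorSpan_eq_top_of_nonempty ℝ E E ⟨c, hCT hc⟩]
    exact hTspan
  obtain ⟨f, u, hf0, hfT, hfb⟩ := geometric_hahn_banach_of_nonempty_interior hTconv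
    (convex_singleton b) (Set.disjoint_singleton_right.2 fun h => hbT (interior_subset h))
    hTint (Set.singleton_nonempty b)
  have hle : ∀ x ∈ T, f x ≤ f b := fun x hx => (hfT x hx).trans (hfb b rfl)
  refine ⟨f, fun hker => hf0 ?_, fun x hx => hle x (hCT hx)⟩
  have hfc : f c = f b := by
    have := hker (hdir c hc)
    rw [LinearMap.mem_ker, ContinuousLinearMap.coe_coe, map_sub] at this
    linarith
  have hWker : W ≤ LinearMap.ker (f : E →ₗ[ℝ] ℝ) := fun w hw => by
    have h₁ := hle _ (hcW w hw)
    have h₂ := hle _ (hcW (-w) (W.neg_mem hw))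
    rw [map_add, hfc] at h₁ h₂
    rw [LinearMap.mem_ker, ContinuousLinearMap.coe_coe]
    simp only [map_neg] at h₂
    linarith
  ext x
  exact (hVW.sup_eq_top ▸ sup_le hker hWker) (Submodule.mem_top (x := x))

variable {α : Type*} [MeasurableSpace α] {μ : Measure α} [IsProbabilityMeasure μ]

theorem Convex.integral_mem_of_finiteDimensional {C : Set E} (hC : Convex ℝ C) {f : α → E}
    (hfC : ∀ᵐ x ∂μ, f x ∈ C) (hfi : Integrable f μ) : ∫ x, f x ∂μ ∈ C := by
  induction hn : Module.finrank ℝ (vectorSpan ℝ C) using Nat.strong_induction_on generalizing C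
    with | _ n ih => ?_
  set b := ∫ x, f x ∂μ
  have hbC : b ∈ affineSpan ℝ C :=
    (affineSpan ℝ C).convex.integral_mem (affineSpan ℝ C).closed_of_finiteDimensional
      (hfC.mono fun x hx => subset_affineSpan ℝ C hx) hfi
  by_contra hb
  obtain ⟨φ, hφV, hφb⟩ := hC.exists_dual_le_of_mem_affineSpan_of_notMem hbC hb
  have hφf : ∀ᵐ x ∂μ, φ (f x) = φ b := by
    have hmean : ∫ x, φ (f x) ∂μ = ∫ _x, φ b ∂μ := by
      rw [φ.integral_comp_comm hfi, integral_const, probReal_univ, one_smul]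
    exact (integral_eq_iff_of_ae_le (φ.integrable_comp hfi) (integrable_const _)
      (hfC.mono fun x hx => hφb _ hx)).1 hmean
  set C' := C ∩ {x | φ x = φ b}
  have hC' : Convex ℝ C' := hC.inter ((convex_singleton (φ b)).affine_preimage φ.toAffineMap)
  have hspan : vectorSpan ℝ C' < vectorSpan ℝ C := by
    refine lt_of_le_of_ne (vectorSpan_mono ℝ Set.inter_subset_left) fun heq => hφV ?_
    rw [← heq, vectorSpan_def, Submodule.span_le]
    rintro _ ⟨x, ⟨-, hx : φ x = φ b⟩, y, ⟨-, hy : φ y = φ b⟩, rfl⟩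
    simp [hx, hy]
  exact hb (ih _ (hn ▸ Submodule.finrank_lt_finrank_of_lt hspan) hC'
    ((hfC.and hφf).mono fun x hx => hx) rfl).1

theorem ConcaveOn.le_map_integral_of_finiteDimensional {s : Set E} {g : E → ℝ}
    (hg : ConcaveOn ℝ s g) {f : α → E} (hfs : ∀ᵐ x ∂μ, f x ∈ s) (hfi : Integrable f μ)
    (hgi : Integrable (g ∘ f) μ) :
    ∫ x, g (f x) ∂μ ≤ g (∫ x, f x ∂μ) := by
  have hmem := hg.convex_hypograph.integral_mem_of_finiteDimensional
    (f := fun x => (f x, (g ∘ f) x)) (hfs.mono fun x hx => ⟨hx, le_rfl⟩) (hfi.prodMk hgi)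
  rw [integral_pair hfi hgi] at hmem
  exact hmem.2

end FiniteDimensional

theorem evi_barycenter_vi_general {d : ℕ} (X : Set (EuclideanSpace ℝ (Fin d)))
    (hXconv : Convex ℝ X) (hXcomp : IsCompact X)
    (F : EuclideanSpace ℝ (Fin d) → EuclideanSpace ℝ (Fin d))
    (hFmeas : Measurable F) (B : ℝ) (hFbd : ∀ x ∈ X, ‖F x‖ ≤ B)
    (hconc : ∀ x' ∈ X, ConcaveOn ℝ X (fun x => ⟪F x, x' - x⟫))
    (ε : ℝ)
    (μ : Measure (EuclideanSpace ℝ (Fin d))) [IsProbabilityMeasure μ] (hsupp : μ Xᶜ = 0)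
    (hEVI : ∀ x' ∈ X, (∫ x, ⟪F x, x' - x⟫ ∂μ) ≥ -ε) :
    (∫ x, x ∂μ) ∈ X ∧
    ∀ x' ∈ X, ⟪F (∫ x, x ∂μ), x' - (∫ x, x ∂μ)⟫ ≥ -ε := by
  have hmem : ∀ᵐ x ∂μ, x ∈ X := mem_ae_iff.2 hsupp
  obtain ⟨R, hR⟩ := hXcomp.isBounded.exists_norm_le
  have hid : Integrable (fun x => x) μ := .of_bound aestronglyMeasurable_id R (hmem.mono hR)
  refine ⟨hXconv.integral_mem hXcomp.isClosed hmem hid, fun x' hx' => ?_⟩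
  have hgap : ∀ x ∈ X, ‖⟪F x, x' - x⟫‖ ≤ B * (R + R) := fun x hx =>
    calc ‖⟪F x, x' - x⟫‖ ≤ ‖F x‖ * ‖x' - x‖ := norm_inner_le_norm _ _
      _ ≤ B * (R + R) := mul_le_mul (hFbd x hx) ((norm_sub_le _ _).trans (add_le_add (hR x' hx')
          (hR x hx))) (norm_nonneg _) ((norm_nonneg _).trans (hFbd x hx))
  have hgi : Integrable (fun x => ⟪F x, x' - x⟫) μ :=
    .of_bound (hFmeas.inner (measurable_const.sub measurable_id)).aestronglyMeasurable _
      (hmem.mono hgap)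
  calc -ε ≤ ∫ x, ⟪F x, x' - x⟫ ∂μ := hEVI x' hx'
    _ ≤ _ := (hconc x' hx').le_map_integral_of_finiteDimensional hmem hid hgi

/-- **EVIs collapse to VIs under concavity of the gap** (Proposition `collapse`):
if `X ⊆ ℝ^d` is nonempty, convex, compact, `F` is Borel measurable and bounded, and
`x ↦ ⟨F(x), x' − x⟩` is concave on `X` for every `x' ∈ X`, then for any `ε`-approximate
EVI solution `μ` the barycenter `x̄ = ∫ x dμ(x)` lies in `X` and is an `ε`-approximate VI
solution. -/
theorem evi_barycenter_vi {d : ℕ} (X : Set (EuclideanSpace ℝ (Fin d)))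
    (hXne : X.Nonempty) (hXconv : Convex ℝ X) (hXcomp : IsCompact X)
    (F : EuclideanSpace ℝ (Fin d) → EuclideanSpace ℝ (Fin d))
    (hFmeas : Measurable F) (B : ℝ) (hFbd : ∀ x ∈ X, ‖F x‖ ≤ B)
    (hconc : ∀ x' ∈ X, ConcaveOn ℝ X (fun x => ⟪F x, x' - x⟫))
    (ε : ℝ) (hε : 0 ≤ ε)
    (μ : Measure (EuclideanSpace ℝ (Fin d))) [IsProbabilityMeasure μ] (hsupp : μ Xᶜ = 0)
    (hEVI : ∀ x' ∈ X, (∫ x, ⟪F x, x' - x⟫ ∂μ) ≥ -ε) :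
    (∫ x, x ∂μ) ∈ X ∧
    ∀ x' ∈ X, ⟪F (∫ x, x ∂μ), x' - (∫ x, x ∂μ)⟫ ≥ -ε :=
  evi_barycenter_vi_general X hXconv hXcomp F hFmeas B hFbd hconc ε μ hsupp hEVI
end

section
/- Let X ⊆ ℝ^d be nonempty, convex, and compact, let u : X → ℝ be differentiable with bounded gradient, let γ ∈ (0, 1], and let x* ∈ X be a global maximizer of u over X such that u is γ-quasar-concave with respect to x*, i.e., u(x*) ≤ u(x) + (1/γ)⟨∇u(x), x* − x⟩ for all x ∈ X. Let μ be a Borel probability measure on X satisfying ∫ ⟨−∇u(x), x' − x⟩ dμ(x) ≥ 0 for all x' ∈ X (an exact EVI solution for F = −∇u). Then ∫ u(x) dμ(x) ≥ max_{x ∈ X} u(x) = u(x*), and consequently u(x) = u(x*) for μ-almost every x. -/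
/-!
Testing the EVI at `x' = x*` gives `∫ ⟪∇u x, x* - x⟫ dμ ≤ 0`, while maximality of `x*` and
quasar-concavity give `0 ≤ u x* - u x ≤ ⟪∇u x, x* - x⟫ / γ` on `X`. The integrand is thus
nonnegative with nonpositive integral, hence vanishes almost everywhere, and so does
`u x* - u x`; the integral of `u` is then `u x*`.
-/

open MeasureTheory
open scoped RealInnerProductSpace

section

variable {E : Type*} [NormedAddCommGroup E] [InnerProductSpace ℝ E] [MeasurableSpace E]
  [BorelSpace E]

theorem measurable_gradient [CompleteSpace E] (u : E → ℝ) : Measurable (gradient u) :=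
  (InnerProductSpace.toDual ℝ E).symm.continuous.measurable.comp (measurable_fderiv ℝ u)

theorem aestronglyMeasurable_of_ae_hasGradientAt [CompleteSpace E] [SecondCountableTopology E]
    {μ : Measure E} {u : E → ℝ} {G : E → E}
    (h : ∀ᵐ x ∂μ, HasGradientAt u (G x) x) : AEStronglyMeasurable G μ :=
  (measurable_gradient u).aestronglyMeasurable.congr (h.mono fun _ hx => hx.gradient)

theorem integrable_inner_sub_of_norm_le [SecondCountableTopology E] {μ : Measure E}
    [IsFiniteMeasure μ] {X : Set E} (hX : Bornology.IsBounded X) (hμX : ∀ᵐ x ∂μ, x ∈ X)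
    {G : E → E} (hG : AEStronglyMeasurable G μ) {B : ℝ} (hGB : ∀ x ∈ X, ‖G x‖ ≤ B) (y : E) :
    Integrable (fun x => ⟪G x, y - x⟫) μ := by
  obtain ⟨R, hR⟩ := hX.exists_norm_le
  refine Integrable.of_bound (hG.inner (aestronglyMeasurable_const.sub aestronglyMeasurable_id))
    (B * (‖y‖ + R)) ?_
  filter_upwards [hμX] with x hx
  calc ‖⟪G x, y - x⟫‖ ≤ ‖G x‖ * ‖y - x‖ := norm_inner_le_norm _ _
    _ ≤ B * (‖y‖ + R) := by
      gcongr
      · exact (norm_nonneg _).trans (hGB x hx)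
      · exact hGB x hx
      · exact (norm_sub_le _ _).trans (by gcongr; exact hR x hx)

end

theorem quasar_concave_evi_general {d : ℕ} (X : Set (EuclideanSpace ℝ (Fin d)))
    (hXcomp : IsCompact X)
    (u : EuclideanSpace ℝ (Fin d) → ℝ)
    (G : EuclideanSpace ℝ (Fin d) → EuclideanSpace ℝ (Fin d))
    (hgrad : ∀ x ∈ X, HasGradientAt u (G x) x)
    (B : ℝ) (hGbd : ∀ x ∈ X, ‖G x‖ ≤ B)
    (γ : ℝ) (hγ0 : 0 < γ)
    (xs : EuclideanSpace ℝ (Fin d)) (hxs : xs ∈ X)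
    (hmax : ∀ x ∈ X, u x ≤ u xs)
    (hquasar : ∀ x ∈ X, u xs ≤ u x + (1/γ) * ⟪G x, xs - x⟫)
    (μ : Measure (EuclideanSpace ℝ (Fin d))) [IsProbabilityMeasure μ] (hsupp : μ Xᶜ = 0)
    (hEVI : ∀ x' ∈ X, (∫ x, ⟪-G x, x' - x⟫ ∂μ) ≥ 0) :
    (∫ x, u x ∂μ) ≥ u xs ∧ ∀ᵐ x ∂μ, u x = u xs := by
  have hX : ∀ᵐ x ∂μ, x ∈ X := ae_iff.mpr hsupp
  have hint : Integrable (fun x => ⟪G x, xs - x⟫) μ :=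
    integrable_inner_sub_of_norm_le hXcomp.isBounded hX
      (aestronglyMeasurable_of_ae_hasGradientAt (hX.mono hgrad)) hGbd xs
  have hnonneg : ∀ᵐ x ∂μ, 0 ≤ ⟪G x, xs - x⟫ := by
    filter_upwards [hX] with x hx
    have := (hmax x hx).trans (hquasar x hx)
    exact nonneg_of_mul_nonneg_right (by linarith) (one_div_pos.mpr hγ0)
  have hzero : ∀ᵐ x ∂μ, ⟪G x, xs - x⟫ = 0 := by
    have hle : ∫ x, ⟪G x, xs - x⟫ ∂μ ≤ 0 := by
      simpa [inner_neg_left, integral_neg] using hEVI xs hxs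
    exact (integral_eq_zero_iff_of_nonneg_ae hnonneg hint).mp
      (le_antisymm hle (integral_nonneg_of_ae hnonneg))
  have hae : ∀ᵐ x ∂μ, u x = u xs := by
    filter_upwards [hX, hzero] with x hx hx0
    have := hquasar x hx
    rw [hx0, mul_zero, add_zero] at this
    exact le_antisymm (hmax x hx) this
  refine ⟨?_, hae⟩
  rw [integral_congr_ae hae]
  simp

/-- **EVI solutions of quasar-concave maximization put all mass on global maxima**
(Proposition `convex-equiv`): let `X ⊆ ℝ^d` be nonempty, convex, compact, `u : X → ℝ`
differentiable with bounded gradient `G`, `γ ∈ (0,1]`, and `x* ∈ X` a global maximizer of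
`u` with respect to which `u` is `γ`-quasar-concave. If `μ` is an exact EVI solution for
`F = −∇u`, then `∫ u dμ ≥ u(x*) = max_X u`, and `u(x) = u(x*)` for `μ`-almost every `x`. -/
theorem quasar_concave_evi {d : ℕ} (X : Set (EuclideanSpace ℝ (Fin d)))
    (hXne : X.Nonempty) (hXconv : Convex ℝ X) (hXcomp : IsCompact X)
    (u : EuclideanSpace ℝ (Fin d) → ℝ)
    (G : EuclideanSpace ℝ (Fin d) → EuclideanSpace ℝ (Fin d))
    (hgrad : ∀ x ∈ X, HasGradientAt u (G x) x)
    (B : ℝ) (hGbd : ∀ x ∈ X, ‖G x‖ ≤ B)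
    (γ : ℝ) (hγ0 : 0 < γ) (hγ1 : γ ≤ 1)
    (xs : EuclideanSpace ℝ (Fin d)) (hxs : xs ∈ X)
    (hmax : ∀ x ∈ X, u x ≤ u xs)
    (hquasar : ∀ x ∈ X, u xs ≤ u x + (1/γ) * ⟪G x, xs - x⟫)
    (μ : Measure (EuclideanSpace ℝ (Fin d))) [IsProbabilityMeasure μ] (hsupp : μ Xᶜ = 0)
    (hEVI : ∀ x' ∈ X, (∫ x, ⟪-G x, x' - x⟫ ∂μ) ≥ 0) :
    (∫ x, u x ∂μ) ≥ u xs ∧ ∀ᵐ x ∂μ, u x = u xs :=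
  quasar_concave_evi_general X hXcomp u G hgrad B hGbd γ hγ0 xs hxs hmax hquasar μ hsupp hEVI
end

section
/- Let p ∈ (0, 8] and define u : ℝ → ℝ by u(x) = −(3/4)p x⁴ + p x³ + 1. Then x = 1 is a global maximizer of u over ℝ with u(1) = 1 + p/4, and u is (1, p/4)-smooth with respect to x* = 1: for all x ∈ ℝ, u'(x) · (1 − x) ≥ u(1) − (1 + p/4) · u(x), equivalently 3p x²(1 − x)² ≥ (1 + p/4) − (1 + p/4)u(x). -/
/-! Writing `u(1) - u(x) = (p/4)(x - 1)²(3x² + 2x + 1)` shows that `1` is the maximizer.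
Since `u'(x)(1 - x) = 3p x²(1 - x)²` and `1 - u(x) = (p/4) x³(3x - 4)`, after cancelling `p x²`
the smoothness inequality becomes `c x(3x - 4) ≤ 3(1 - x)²` with `c = (4 + p)/16`, and for
`0 ≤ c ≤ 3/4` the difference is the sum of squares `(3 - 4c)(1 - x)² + c(x - 2)²`;
`c ≤ 3/4` is exactly `p ≤ 8`. -/

lemma mul_mul_sub_le_three_mul_one_sub_sq {c : ℝ} (hc0 : 0 ≤ c) (hc : c ≤ 3/4) (x : ℝ) :
    c * x * (3 * x - 4) ≤ 3 * (1 - x)^2 := by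
  nlinarith [mul_nonneg (by linarith : (0 : ℝ) ≤ 3 - 4 * c) (sq_nonneg (1 - x)),
    mul_nonneg hc0 (sq_nonneg (x - 2))]

noncomputable def quartic (p x : ℝ) : ℝ := -(3/4) * p * x^4 + p * x^3 + 1

variable (p : ℝ)

lemma quartic_one : quartic p 1 = 1 + p/4 := by
  norm_num [quartic]; ring

lemma hasDerivAt_quartic (x : ℝ) : HasDerivAt (quartic p) (3 * p * x^2 * (1 - x)) x := by
  have h := (((hasDerivAt_pow 4 x).const_mul (-(3/4) * p)).add
    ((hasDerivAt_pow 3 x).const_mul p)).add_const 1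
  exact h.congr_deriv (by norm_num; ring)

lemma quartic_one_sub_quartic (x : ℝ) :
    quartic p 1 - quartic p x = p/4 * (x - 1)^2 * (3 * x^2 + 2 * x + 1) := by
  simp only [quartic]; ring

variable {p}

lemma quartic_le_quartic_one (hp : 0 ≤ p) (x : ℝ) : quartic p x ≤ quartic p 1 := by
  have hq : 0 < 3 * x^2 + 2 * x + 1 := by nlinarith [sq_nonneg (3 * x + 1)]
  have hgap : 0 ≤ p/4 * (x - 1)^2 * (3 * x^2 + 2 * x + 1) := by positivity
  linarith [quartic_one_sub_quartic p x]

lemma one_add_mul_one_sub_quartic_le (hp0 : 0 ≤ p) (hp8 : p ≤ 8) (x : ℝ) :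
    (1 + p/4) - (1 + p/4) * quartic p x ≤ 3 * p * x^2 * (1 - x)^2 := by
  have key := mul_mul_sub_le_three_mul_one_sub_sq (c := (4 + p) / 16)
    (by linarith) (by linarith) x
  have hpx : 0 ≤ p * x^2 := by positivity
  calc (1 + p/4) - (1 + p/4) * quartic p x = p * x^2 * ((4 + p) / 16 * x * (3 * x - 4)) := by
        simp only [quartic]; ring
    _ ≤ p * x^2 * (3 * (1 - x)^2) := mul_le_mul_of_nonneg_left key hpx
    _ = 3 * p * x^2 * (1 - x)^2 := by ring

/-- **A smooth but not quasar-concave polynomial** (Claim `u`):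
for `p ∈ (0, 8]` and `u(x) = −(3/4)p x⁴ + p x³ + 1`, the point `x = 1` is a global
maximizer with `u(1) = 1 + p/4`, and `u` is `(1, p/4)`-smooth with respect to `x* = 1`:
`u'(x)(1 − x) ≥ u(1) − (1 + p/4)·u(x)` for all `x`, equivalently
`3p x²(1 − x)² ≥ (1 + p/4) − (1 + p/4)·u(x)`. -/
theorem polynomial_smooth (p : ℝ) (hp0 : 0 < p) (hp8 : p ≤ 8)
    (u : ℝ → ℝ) (hu : ∀ x, u x = -(3/4) * p * x^4 + p * x^3 + 1) :
    (∀ x : ℝ, u x ≤ u 1) ∧ u 1 = 1 + p/4 ∧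
    (∀ x : ℝ, deriv u x * (1 - x) ≥ u 1 - (1 + p/4) * u x) ∧
    (∀ x : ℝ, 3 * p * x^2 * (1 - x)^2 ≥ (1 + p/4) - (1 + p/4) * u x) := by
  obtain rfl : u = quartic p := funext hu
  have smooth := one_add_mul_one_sub_quartic_le hp0.le hp8
  refine ⟨quartic_le_quartic_one hp0.le, quartic_one p, fun x => ?_, smooth⟩
  rw [(hasDerivAt_quartic p x).deriv, quartic_one]
  calc (1 + p/4) - (1 + p/4) * quartic p x ≤ 3 * p * x^2 * (1 - x)^2 := smooth x
    _ = 3 * p * x^2 * (1 - x) * (1 - x) := by ring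
end

section
/- Let A ∈ ℝ^{m×d} and b ∈ ℝ^m, and suppose the polytope X = {x ∈ ℝ^d : A x ≤ b} is nonempty and bounded. Let K ∈ ℝ^{d×d} and c ∈ ℝ^d. Then K x + c ∈ X for all x ∈ X if and only if there exists a matrix V ∈ ℝ^{m×m} with all entries nonnegative satisfying V A = A K and V b ≤ b − A c (inequalities between vectors are entrywise). -/
/-!
The backward direction is monotonicity of a nonnegative matrix:
`A (K x + c) = V (A x) + A c ≤ V b + A c ≤ b`. For the forward direction, row `i` of the
hypothesis says that `x ↦ (A K)ᵢ ⬝ x` is bounded by `bᵢ - (A c)ᵢ` on the nonempty polyhedron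
`X`; the affine Farkas lemma turns this bound into a nonnegative row `yᵢ` with `yᵢ A = (A K)ᵢ`
and `yᵢ ⬝ b ≤ bᵢ - (A c)ᵢ`, and these rows form `V`.

The affine Farkas lemma reduces to the homogeneous one for the rows `(Aᵢ, bᵢ)` and `(0, 1)`,
which is the separation of a point from a finitely generated cone. That cone is closed because,
by the conic Carathéodory theorem, it is a finite union of cones over linearly independent
families, each the image of the closed orthant under an injective linear map.
-/

open Function Matrix

namespace PointedCone

section Caratheodory

variable {𝕜 E ι : Type*} [Field 𝕜] [LinearOrder 𝕜] [IsStrictOrderedRing 𝕜]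
  [AddCommGroup E] [Module 𝕜 E] [Fintype ι]

theorem mem_hull_range_iff {g : ι → E} {v : E} :
    v ∈ hull 𝕜 (Set.range g) ↔ ∃ y : ι → 𝕜, 0 ≤ y ∧ ∑ i, y i • g i = v := by
  rw [Submodule.mem_span_range_iff_exists_fun]
  constructor
  · rintro ⟨c, rfl⟩
    exact ⟨fun i => c i, fun i => (c i).2, rfl⟩
  · rintro ⟨y, hy, rfl⟩
    exact ⟨fun i => ⟨y i, hy i⟩, rfl⟩

theorem exists_pos_relation_of_not_linearIndepOn {g : ι → E} {s : Set ι}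
    (hs : ¬LinearIndepOn 𝕜 g s) :
    ∃ a : ι → 𝕜, (∀ i ∉ s, a i = 0) ∧ ∑ i, a i • g i = 0 ∧ ∃ i, 0 < a i := by
  classical
  rw [← s.coe_toFinset, not_linearIndepOn_finset_iff] at hs
  obtain ⟨f, hf, i, his, hfi⟩ := hs
  set a : ι → 𝕜 := fun j => if j ∈ s then f j else 0
  have ha : ∀ j ∉ s, a j = 0 := fun j hj => if_neg hj
  have hrel : ∑ j, a j • g j = 0 := by
    rw [← hf]
    simp only [a, ite_smul, zero_smul, ← Finset.sum_filter]
    exact Finset.sum_congr (by ext; simp) fun _ _ => rfl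
  rcases hfi.lt_or_gt with hneg | hpos
  · refine ⟨-a, fun j hj => by simp [ha j hj], by simp [neg_smul, hrel], i, ?_⟩
    simpa [a, Set.mem_toFinset.mp his] using hneg
  · exact ⟨a, ha, hrel, i, by simpa [a, Set.mem_toFinset.mp his] using hpos⟩

theorem exists_nonneg_support_ssubset_of_relation {g : ι → E} {y a : ι → 𝕜} (hy : 0 ≤ y)
    (ha : ∀ i ∉ support y, a i = 0) (hrel : ∑ i, a i • g i = 0) (hpos : ∃ i, 0 < a i) :
    ∃ z : ι → 𝕜, 0 ≤ z ∧ support z ⊂ support y ∧ ∑ i, z i • g i = ∑ i, y i • g i := by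
  classical
  obtain ⟨i₀, hi₀, hmin⟩ := (Finset.univ.filter (0 < a ·)).exists_min_image (fun i => y i / a i)
    (by simpa [Finset.Nonempty] using hpos)
  replace hi₀ : 0 < a i₀ := (Finset.mem_filter.mp hi₀).2
  set t := y i₀ / a i₀
  have ht : 0 ≤ t := div_nonneg (hy i₀) hi₀.le
  refine ⟨y - t • a, fun i => ?_, ?_, ?_⟩
  · rcases lt_or_ge 0 (a i) with hai | hai
    · have := hmin i (by simpa using hai)
      simpa using sub_nonneg.mpr ((le_div_iff₀ hai).mp this)
    · have := mul_nonpos_of_nonneg_of_nonpos ht hai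
      simp only [Pi.zero_apply, Pi.sub_apply, Pi.smul_apply, smul_eq_mul]
      linarith [show 0 ≤ y i from hy i]
  · have hsub : support (y - t • a) ⊆ support y := fun i hi hyi => by
      simp [hyi, ha i (by simpa using hyi)] at hi
    refine (Set.ssubset_iff_of_subset hsub).mpr ⟨i₀, fun hyi => ?_, ?_⟩
    · exact hi₀.ne' (ha i₀ (by simpa using hyi))
    · simp [t, div_mul_cancel₀ _ hi₀.ne']
  · simp only [Pi.sub_apply, Pi.smul_apply, smul_eq_mul, sub_smul, Finset.sum_sub_distrib,
      mul_smul, ← Finset.smul_sum, hrel, smul_zero, sub_zero]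

theorem exists_nonneg_linearIndepOn_support (g : ι → E) {y : ι → 𝕜} (hy : 0 ≤ y) :
    ∃ z : ι → 𝕜, 0 ≤ z ∧ LinearIndepOn 𝕜 g (support z) ∧ ∑ i, z i • g i = ∑ i, y i • g i := by
  induction hn : (support y).ncard using Nat.strong_induction_on generalizing y with
  | _ n ih =>
  by_cases hli : LinearIndepOn 𝕜 g (support y)
  · exact ⟨y, hy, hli, rfl⟩
  obtain ⟨a, ha, hrel, hpos⟩ := exists_pos_relation_of_not_linearIndepOn hli
  obtain ⟨z, hz, hzy, hsum⟩ := exists_nonneg_support_ssubset_of_relation hy ha hrel hpos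
  obtain ⟨w, hw, hli, hsum'⟩ := ih _ (hn ▸ Set.ncard_lt_ncard hzy (Set.toFinite _)) hz rfl
  exact ⟨w, hw, hli, hsum'.trans hsum⟩

end Caratheodory

section Closed

variable {E ι : Type*} [AddCommGroup E] [Module ℝ E] [TopologicalSpace E]
  [IsTopologicalAddGroup E] [ContinuousSMul ℝ E] [T2Space E] [Finite ι]

theorem isClosed_hull_range_of_linearIndependent {g : ι → E} (hg : LinearIndependent ℝ g) :
    IsClosed (hull ℝ (Set.range g) : Set E) := by
  have := Fintype.ofFinite ι
  have himage : (hull ℝ (Set.range g) : Set E) = Fintype.linearCombination ℝ g '' Set.Ici 0 := by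
    ext v
    simp [mem_hull_range_iff, Fintype.linearCombination_apply]
  rw [himage]
  exact (LinearMap.isClosedEmbedding_of_injective (LinearMap.ker_eq_bot.mpr
    hg.fintypeLinearCombination_injective)).isClosedMap _ isClosed_Ici

theorem isClosed_hull_range (g : ι → E) : IsClosed (hull ℝ (Set.range g) : Set E) := by
  have := Fintype.ofFinite ι
  have hunion : (hull ℝ (Set.range g) : Set E) =
      ⋃ s : {s : Set ι // LinearIndepOn ℝ g s}, hull ℝ (Set.range fun i : s.1 => g i) := by
    ext v
    refine ⟨fun hv => ?_, fun hv => ?_⟩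
    · obtain ⟨y, hy, rfl⟩ := mem_hull_range_iff.mp hv
      obtain ⟨z, hz, hli, hsum⟩ := exists_nonneg_linearIndepOn_support g hy
      refine Set.mem_iUnion.mpr ⟨⟨_, hli⟩, hsum ▸ Submodule.sum_mem _ fun i _ => ?_⟩
      by_cases hi : z i = 0
      · simp [hi]
      · exact smul_mem _ (hz i) (subset_hull ⟨⟨i, hi⟩, rfl⟩)
    · obtain ⟨s, hs⟩ := Set.mem_iUnion.mp hv
      exact Submodule.span_mono (Set.range_comp_subset_range _ g) hs
  rw [hunion]
  exact isClosed_iUnion_of_finite fun s => isClosed_hull_range_of_linearIndependent s.2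

theorem exists_strongDual_nonneg_of_notMem_hull_range [LocallyConvexSpace ℝ E] {g : ι → E}
    {v : E} (hv : v ∉ hull ℝ (Set.range g)) :
    ∃ f : StrongDual ℝ E, (∀ i, 0 ≤ f (g i)) ∧ f v < 0 := by
  obtain ⟨f, hf, hfv⟩ :=
    ProperCone.hyperplane_separation_point ⟨hull ℝ (Set.range g), isClosed_hull_range g⟩ hv
  exact ⟨f, fun i => hf _ (subset_hull ⟨i, rfl⟩), hfv⟩

end Closed

end PointedCone

theorem map_eq_dotProduct {R n F : Type*} [CommSemiring R] [Fintype n] [DecidableEq n]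
    [FunLike F (n → R) R] [LinearMapClass F R (n → R) R] (f : F) (x : n → R) :
    f x = x ⬝ᵥ fun j => f (Pi.single j 1) := by
  conv_lhs => rw [← Finset.univ_sum_single x]
  simp only [map_sum, dotProduct]
  refine Finset.sum_congr rfl fun i _ => ?_
  rw [← smul_eq_mul, ← map_smul, ← Pi.single_smul, smul_eq_mul, mul_one]

namespace Matrix

variable {m n : Type*} [Fintype n]

theorem farkas_alternative [Fintype m] (M : Matrix m n ℝ) (v : n → ℝ) :
    (∃ y, 0 ≤ y ∧ y ᵥ* M = v) ∨ ∃ w, 0 ≤ M *ᵥ w ∧ v ⬝ᵥ w < 0 := by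
  classical
  by_cases hv : v ∈ PointedCone.hull ℝ (Set.range M)
  · obtain ⟨y, hy, hyv⟩ := PointedCone.mem_hull_range_iff.mp hv
    exact .inl ⟨y, hy, by rw [vecMul_eq_sum, hyv]⟩
  · obtain ⟨f, hf, hfv⟩ := PointedCone.exists_strongDual_nonneg_of_notMem_hull_range hv
    have hfw := map_eq_dotProduct f
    refine .inr ⟨fun j => f (Pi.single j 1), fun i => ?_, ?_⟩
    · exact (hfw (M i)).symm.trans_ge (hf i)
    · simpa only [← hfw] using hfv

theorem dotProduct_nonpos_of_mulVec_nonpos {A : Matrix m n ℝ} {b : m → ℝ} {g : n → ℝ} {β : ℝ}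
    (hne : ∃ x, A *ᵥ x ≤ b) (hle : ∀ x, A *ᵥ x ≤ b → g ⬝ᵥ x ≤ β) {u : n → ℝ}
    (hu : A *ᵥ u ≤ 0) : g ⬝ᵥ u ≤ 0 := by
  obtain ⟨x₀, hx₀⟩ := hne
  by_contra! hpos
  set s := (β - g ⬝ᵥ x₀ + 1) / (g ⬝ᵥ u)
  have hs : 0 ≤ s := div_nonneg (by linarith [hle x₀ hx₀]) hpos.le
  have hfeas : A *ᵥ (x₀ + s • u) ≤ b := by
    rw [mulVec_add, mulVec_smul]
    intro i
    have := mul_nonpos_of_nonneg_of_nonpos hs (hu i)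
    simp only [Pi.add_apply, Pi.smul_apply, smul_eq_mul]
    linarith [hx₀ i]
  have := hle _ hfeas
  rw [dotProduct_add, dotProduct_smul, smul_eq_mul, div_mul_cancel₀ _ hpos.ne'] at this
  linarith

theorem exists_nonneg_vecMul_eq_of_forall_dotProduct_le [Fintype m] (A : Matrix m n ℝ)
    (b : m → ℝ) (hne : ∃ x, A *ᵥ x ≤ b) {g : n → ℝ} {β : ℝ} (hle : ∀ x, A *ᵥ x ≤ b → g ⬝ᵥ x ≤ β) :
    ∃ y, 0 ≤ y ∧ y ᵥ* A = g ∧ y ⬝ᵥ b ≤ β := by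
  rcases farkas_alternative (fromBlocks A (replicateCol Unit b) 0 (1 : Matrix Unit Unit ℝ))
    (Sum.elim g fun _ => β) with ⟨y, hy, hyv⟩ | ⟨w, hw, hwv⟩
  · rw [vecMul_fromBlocks] at hyv
    refine ⟨y ∘ Sum.inl, fun i => hy _, funext fun j => ?_, ?_⟩
    · simpa using congrFun hyv (.inl j)
    · have hβ := congrFun hyv (.inr ())
      simp [mulVec_replicateCol_eq_const] at hβ
      linarith [show 0 ≤ y (.inr ()) from hy _]
  · -- The separating `(u, t)` makes `-u / t` violate the bound if `t > 0`, and makes `-u` a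
    -- recession direction of `X` along which `g` increases if `t = 0`.
    exfalso
    rw [fromBlocks_mulVec] at hw
    set u := w ∘ Sum.inl
    set t := w (.inr ())
    have hrow : ∀ i, 0 ≤ (A *ᵥ u) i + b i * t := fun i => by
      simpa [mulVec, dotProduct] using hw (.inl i)
    have ht : 0 ≤ t := by simpa using hw (.inr ())
    have hobj : g ⬝ᵥ u + β * t < 0 := by
      simpa [dotProduct, Fintype.sum_sum_type, u, t] using hwv
    rcases ht.eq_or_lt with ht0 | htpos
    · have := dotProduct_nonpos_of_mulVec_nonpos hne hle (u := -u) fun i => by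
        simpa [mulVec_neg, ← ht0] using hrow i
      rw [dotProduct_neg] at this
      rw [← ht0, mul_zero, add_zero] at hobj
      linarith
    · have := hle (-t⁻¹ • u) fun i => by
        have := hrow i
        simp only [mulVec_smul, Pi.smul_apply, smul_eq_mul, neg_mul]
        rw [neg_le, le_inv_mul_iff₀ htpos]
        linarith
      rw [dotProduct_smul, smul_eq_mul, neg_mul, neg_le, le_inv_mul_iff₀ htpos] at this
      linarith

end Matrix

theorem affine_endomorphism_characterization_general {d m : ℕ}
    (A : Matrix (Fin m) (Fin d) ℝ) (b : Fin m → ℝ)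
    (hne : {x : Fin d → ℝ | A.mulVec x ≤ b}.Nonempty)
    (K : Matrix (Fin d) (Fin d) ℝ) (c : Fin d → ℝ) :
    (∀ x : Fin d → ℝ, A.mulVec x ≤ b → A.mulVec (K.mulVec x + c) ≤ b) ↔
    ∃ V : Matrix (Fin m) (Fin m) ℝ,
      (∀ i j, 0 ≤ V i j) ∧ V * A = A * K ∧ V.mulVec b ≤ b - A.mulVec c := by
  constructor
  · intro h
    have hrow : ∀ i, ∃ y, 0 ≤ y ∧ y ᵥ* A = (A * K) i ∧ y ⬝ᵥ b ≤ b i - (A *ᵥ c) i := fun i =>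
      exists_nonneg_vecMul_eq_of_forall_dotProduct_le A b hne fun x hx => by
        have := h x hx i
        rw [mulVec_add, mulVec_mulVec] at this
        exact le_sub_iff_add_le.mpr this
    choose V hV0 hVA hVb using hrow
    exact ⟨V, hV0, funext fun i => (mul_apply_eq_vecMul V A i).trans (hVA i), hVb⟩
  · rintro ⟨V, hV0, hVA, hVb⟩ x hx i
    have hmono : (V *ᵥ (A *ᵥ x)) i ≤ (V *ᵥ b) i :=
      dotProduct_le_dotProduct_of_nonneg_left hx (hV0 i)
    rw [mulVec_add, mulVec_mulVec, ← hVA, ← mulVec_mulVec, Pi.add_apply]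
    linarith [hVb i, Pi.sub_apply b (A *ᵥ c) i]

/-- **Characterization of affine endomorphisms of a polytope**
(Theorem `explicit-repres`): let `X = {x ∈ ℝ^d : A x ≤ b}` be a nonempty bounded polytope.
Then `K x + c ∈ X` for all `x ∈ X` if and only if there is an entrywise nonnegative matrix
`V ∈ ℝ^{m×m}` with `V A = A K` and `V b ≤ b − A c` (entrywise). -/
theorem affine_endomorphism_characterization {d m : ℕ}
    (A : Matrix (Fin m) (Fin d) ℝ) (b : Fin m → ℝ)
    (hne : {x : Fin d → ℝ | A.mulVec x ≤ b}.Nonempty)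
    (hbd : ∃ R : ℝ, ∀ x ∈ {x : Fin d → ℝ | A.mulVec x ≤ b}, ∀ i, |x i| ≤ R)
    (K : Matrix (Fin d) (Fin d) ℝ) (c : Fin d → ℝ) :
    (∀ x : Fin d → ℝ, A.mulVec x ≤ b → A.mulVec (K.mulVec x + c) ≤ b) ↔
    ∃ V : Matrix (Fin m) (Fin m) ℝ,
      (∀ i j, 0 ≤ V i j) ∧ V * A = A * K ∧ V.mulVec b ≤ b - A.mulVec c :=
  affine_endomorphism_characterization_general A b hne K c
end
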